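/- arXiv:math/0306425 — 3 statements merged into one kernel-verified Lean document; each statement's English description precedes it below -/
import Mathlib

section
/- With the oscillator operators L_n defined from the family (J_n) with parameters (λ, q), for all n, m ∈ ℤ and all v ∈ V one has (L_n ∘ L_m − L_m ∘ L_n)(v) = (n − m)·L_{n+m}(v) + δ_{n+m,0}·((n³ − n)/12)·(1 + 12λ²)·v. That is, the operators L_n satisfy the Virasoro commutation relations with central charge c = 1 + 12λ² acting as the scalar 1 + 12λ². -/
open scoped BigOperators

/-- Normal ordered product `:J_i J_j:`. -/
noncomputable def normalOrder {V : Type*} [AddCommGroup V] [Module ℂ V]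
    (J : ℤ → Module.End ℂ V) (i j : ℤ) : Module.End ℂ V :=
  if i ≤ j then J i * J j else J j * J i

/-- The oscillator Virasoro operator
`L_n v = δ_{n,0} (λ²/2) v + (1/2) Σ_{j ∈ ℤ} :J_{-j} J_{j+n}: v + iλn J_n v`. -/
noncomputable def oscL {V : Type*} [AddCommGroup V] [Module ℂ V]
    (J : ℤ → Module.End ℂ V) (l : ℝ) (n : ℤ) (v : V) : V :=
  (if n = 0 then (((l ^ 2 / 2 : ℝ) : ℂ)) • v else 0)
    + (1 / 2 : ℂ) • (∑ᶠ j : ℤ, normalOrder J (-j) (j + n) v)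
    + (Complex.I * (l : ℂ) * (n : ℂ)) • J n v

/-!
Split `L_n = δ_{n,0} λ²/2 + S_n + iλn J_n`, where `S_n = ½ Σ_j :J_{-j} J_{j+n}:` is the Sugawara
operator. A normally ordered product differs from the plain product `J_a J_b` by a scalar, so its
commutators are those of `J_a J_b`; this gives `[S_n, J_k] = -k J_{n+k}` and then
`[S_n, :J_a J_b:] = -a J_{n+a} J_b - b J_a J_{n+b}`. Summing the latter over the terms of `S_m`
and normally ordering again yields `[S_n, S_m] = (n - m) S_{n+m} + δ_{n+m,0} (n³ - n)/12`: after
the shift `j ↦ j + n` in one sum the operator parts combine to `(n - m) S_{n+m}`, and the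
reordering scalars add up to `½ Σ_j j (n - j) ([j < n] - [j < 0])`, a finite sum equal to
`(n³ - n)/12`. Finally the term `iλn J_n` contributes `iλ(n² - m²) J_{n+m}` plus, through
`[J_n, J_{-n}] = n`, the scalar `λ² n³`; together with the shift `λ²/2` of `L_0` this raises the
central charge from `1` to `1 + 12λ²`.
-/

open Function

-- The commutator Lie ring on an associative ring is not a global instance in Mathlib.
attribute [local instance] LieRing.ofAssociativeRing

theorem Ring.lie_mul {A : Type*} [Ring A] (x y z : A) : ⁅x, y * z⁆ = ⁅x, y⁆ * z + y * ⁅x, z⁆ := by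
  simp only [Ring.lie_def]; noncomm_ring

theorem Ring.mul_lie {A : Type*} [Ring A] (x y z : A) : ⁅x * y, z⁆ = x * ⁅y, z⁆ + ⁅x, z⁆ * y := by
  simp only [Ring.lie_def]; noncomm_ring

section

variable {V : Type*} [AddCommGroup V] [Module ℂ V]

def IsHeisenberg (J : ℤ → Module.End ℂ V) : Prop :=
  ∀ n m : ℤ, ⁅J n, J m⁆ = if n + m = 0 then (n : ℂ) • (1 : Module.End ℂ V) else 0

def IsRestricted (J : ℤ → Module.End ℂ V) : Prop :=
  ∀ v : V, ∃ N : ℕ, ∀ n : ℤ, (N : ℤ) ≤ n → J n v = 0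

variable {J : ℤ → Module.End ℂ V}

theorem normalOrder_eq_min_max (a b : ℤ) : normalOrder J a b = J (min a b) * J (max a b) := by
  unfold normalOrder
  split_ifs with h
  · rw [min_eq_left h, max_eq_right h]
  · rw [min_eq_right (le_of_not_ge h), max_eq_left (le_of_not_ge h)]

theorem mul_eq_normalOrder_add (hH : IsHeisenberg J) (a b : ℤ) :
    J a * J b = normalOrder J a b + (if a + b = 0 ∧ b < a then (a : ℂ) else 0) • 1 := by
  unfold normalOrder
  by_cases hab : a ≤ b
  · simp [hab, not_lt.mpr hab]
  · have := hH a b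
    rw [Ring.lie_def] at this
    rw [if_neg hab, ← sub_eq_iff_eq_add', this]
    simp only [not_le.mp hab, and_true, ite_smul, zero_smul]

theorem hasFiniteSupport_normalOrder (hR : IsRestricted J) (n : ℤ) (v : V) :
    HasFiniteSupport fun j => normalOrder J (-j) (j + n) v := by
  obtain ⟨N, hN⟩ := hR v
  refine (Set.finite_Ioo (-(N : ℤ)) (N - n)).subset fun j hj => ?_
  rw [mem_support, normalOrder_eq_min_max, Module.End.mul_apply] at hj
  by_contra hout
  exact hj (by rw [hN _ (by simp only [Set.mem_Ioo, not_and_or, not_lt] at hout; omega), map_zero])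

noncomputable def sugawara (hR : IsRestricted J) (n : ℤ) : Module.End ℂ V where
  toFun v := (1 / 2 : ℂ) • ∑ᶠ j : ℤ, normalOrder J (-j) (j + n) v
  map_add' x y := by
    simp only [map_add, finsum_add_distrib (hasFiniteSupport_normalOrder hR n x)
      (hasFiniteSupport_normalOrder hR n y), smul_add]
  map_smul' c x := by
    simp only [map_smul, ← smul_finsum, RingHom.id_apply, smul_comm c]

theorem sugawara_apply (hR : IsRestricted J) (n : ℤ) (v : V) :
    sugawara hR n v = (1 / 2 : ℂ) • ∑ᶠ j : ℤ, normalOrder J (-j) (j + n) v := rfl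

theorem lie_sugawara_apply (hR : IsRestricted J) (n : ℤ) (X : Module.End ℂ V) (v : V) :
    ⁅sugawara hR n, X⁆ v = (1 / 2 : ℂ) • ∑ᶠ j : ℤ, ⁅normalOrder J (-j) (j + n), X⁆ v := by
  have hX : HasFiniteSupport fun j => X (normalOrder J (-j) (j + n) v) :=
    (hasFiniteSupport_normalOrder hR n v).fun_comp (map_zero X)
  simp only [Ring.lie_def, LinearMap.sub_apply, Module.End.mul_apply, sugawara_apply, map_smul,
    map_finsum X (hasFiniteSupport_normalOrder hR n v), ← smul_sub,
    ← finsum_sub_distrib (hasFiniteSupport_normalOrder hR n (X v)) hX]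

theorem lie_normalOrder_mode (hH : IsHeisenberg J) (a b k : ℤ) :
    ⁅normalOrder J a b, J k⁆ =
      (if b + k = 0 then (b : ℂ) else 0) • J a + (if a + k = 0 then (a : ℂ) else 0) • J b := by
  rw [← sub_eq_of_eq_add (mul_eq_normalOrder_add hH a b), sub_lie, smul_lie,
    (Commute.one_left (J k)).lie_eq, smul_zero, sub_zero, Ring.mul_lie, hH, hH]
  split_ifs <;> simp

theorem lie_sugawara_mode (hH : IsHeisenberg J) (hR : IsRestricted J) (n k : ℤ) :
    ⁅sugawara hR n, J k⁆ = (-k : ℂ) • J (n + k) := by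
  ext v
  have hterm : ∀ j : ℤ, ⁅normalOrder J (-j) (j + n), J k⁆ v =
      (if j = -(n + k) then (-k : ℂ) • J (n + k) v else 0) +
        (if j = k then (-k : ℂ) • J (n + k) v else 0) := by
    intro j
    rw [lie_normalOrder_mode hH, LinearMap.add_apply, LinearMap.smul_apply,
      LinearMap.smul_apply]
    congr 1
    · by_cases h : j = -(n + k)
      · subst h; simp
      · rw [if_neg h, if_neg (by omega), zero_smul]
    · by_cases h : j = k
      · subst h; simp [add_comm]
      · rw [if_neg h, if_neg (by omega), zero_smul]
  have hsingle : ∀ a : ℤ,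
      HasFiniteSupport fun j : ℤ => if j = a then (-k : ℂ) • J (n + k) v else 0 :=
    fun a => (Set.finite_singleton a).subset (support_subset_iff'.2 fun j hj => if_neg hj)
  rw [lie_sugawara_apply, finsum_congr hterm, finsum_add_distrib (hsingle _) (hsingle _),
    finsum_eq_single _ _ fun j hj => if_neg hj, finsum_eq_single _ k fun j hj => if_neg hj,
    if_pos rfl, if_pos rfl, LinearMap.smul_apply]
  module

theorem lie_sugawara_normalOrder (hH : IsHeisenberg J) (hR : IsRestricted J) (n a b : ℤ) :
    ⁅sugawara hR n, normalOrder J a b⁆ =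
      (-a : ℂ) • (J (n + a) * J b) + (-b : ℂ) • (J a * J (n + b)) := by
  rw [← sub_eq_of_eq_add (mul_eq_normalOrder_add hH a b), lie_sub, lie_smul,
    (Commute.one_right (sugawara hR n)).lie_eq, smul_zero, sub_zero, Ring.lie_mul,
    lie_sugawara_mode hH, lie_sugawara_mode hH, smul_mul_assoc, mul_smul_comm]

def centralCoeff (n j : ℤ) : ℂ :=
  j * (n - j) * ((if j < n then 1 else 0) - (if j < 0 then 1 else 0))

theorem support_centralCoeff_subset (n : ℤ) :
    support (centralCoeff n) ⊆ Set.Ico (min n 0) (max n 0) := by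
  intro j hj
  by_contra hout
  simp only [Set.mem_Ico, min_le_iff, lt_max_iff, not_and_or, not_or, not_le, not_lt] at hout
  apply hj
  rw [centralCoeff, if_congr (show j < n ↔ j < 0 by omega) rfl rfl, sub_self, mul_zero]

theorem hasFiniteSupport_centralCoeff (n : ℤ) : HasFiniteSupport (centralCoeff n) :=
  (Set.finite_Ico _ _).subset (support_centralCoeff_subset n)

theorem centralCoeff_neg (n j : ℤ) : centralCoeff (-n) (-j) = -centralCoeff n j := by
  unfold centralCoeff
  rcases eq_or_ne j 0 with rfl | hj0
  · simp
  rcases eq_or_ne j n with rfl | hjn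
  · simp
  push_cast
  split_ifs <;> first | (exfalso; omega) | ring

theorem sum_range_mul_sub (k : ℕ) :
    ∑ j ∈ Finset.range k, (j : ℂ) * (k - j) = ((k : ℂ) ^ 3 - k) / 6 := by
  have gauss : ∀ k : ℕ, ∑ j ∈ Finset.range k, (j : ℂ) = k * (k - 1) / 2 := fun k => by
    induction k with
    | zero => simp
    | succ k ih => rw [Finset.sum_range_succ, ih]; push_cast; ring
  induction k with
  | zero => simp
  | succ k ih =>
    calc ∑ j ∈ Finset.range (k + 1), (j : ℂ) * ((k + 1 : ℕ) - j)
        = ∑ j ∈ Finset.range k, ((j : ℂ) * (k - j) + j) + k := by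
          rw [Finset.sum_range_succ]
          push_cast
          congr 1
          · exact Finset.sum_congr rfl fun j _ => by ring
          · ring
      _ = _ := by rw [Finset.sum_add_distrib, ih, gauss]; push_cast; ring

theorem finsum_centralCoeff (n : ℤ) : ∑ᶠ j, centralCoeff n j = ((n : ℂ) ^ 3 - n) / 6 := by
  have hnat : ∀ k : ℕ, ∑ᶠ j, centralCoeff k j = ((k : ℂ) ^ 3 - k) / 6 := by
    intro k
    have hsupp :
        support (centralCoeff k) ⊆ ((Finset.range k).map Nat.castEmbedding : Finset ℤ) := by
      intro j hj
      have := support_centralCoeff_subset k hj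
      simp only [Set.mem_Ico, min_eq_right (Int.natCast_nonneg k),
        max_eq_left (Int.natCast_nonneg k)] at this
      simp only [Finset.coe_map, Finset.coe_range, Set.mem_image, Set.mem_Iio,
        Nat.castEmbedding_apply]
      exact ⟨j.toNat, by omega, by omega⟩
    rw [finsum_eq_sum_of_support_subset _ hsupp, Finset.sum_map, ← sum_range_mul_sub]
    refine Finset.sum_congr rfl fun j hj => ?_
    simp [centralCoeff, Finset.mem_range.1 hj, (Int.natCast_nonneg j).not_gt]
  rcases Int.eq_nat_or_neg n with ⟨k, rfl | rfl⟩
  · exact_mod_cast hnat k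
  · rw [← finsum_comp_equiv (Equiv.neg ℤ)]
    simp only [Equiv.neg_apply, centralCoeff_neg, finsum_neg_distrib, hnat]
    push_cast
    ring

theorem lie_sugawara_normalOrder_apply (hH : IsHeisenberg J) (hR : IsRestricted J)
    (n m j : ℤ) (v : V) :
    ⁅sugawara hR n, normalOrder J (-j) (j + m)⁆ v =
      (j : ℂ) • normalOrder J (-(j - n)) (j - n + (n + m)) v
        - ((j : ℂ) + m) • normalOrder J (-j) (j + (n + m)) v
        + centralCoeff n j • (if n + m = 0 then v else 0) := by
  rw [lie_sugawara_normalOrder hH, mul_eq_normalOrder_add hH, mul_eq_normalOrder_add hH,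
    show n + -j = -(j - n) by ring, show j + m = j - n + (n + m) by ring,
    show n + (j - n + (n + m)) = j + (n + m) by ring]
  simp only [LinearMap.add_apply, LinearMap.smul_apply, Module.End.one_apply]
  by_cases hnm : n + m = 0
  · obtain rfl : m = -n := by omega
    simp only [centralCoeff, if_pos hnm]
    split_ifs <;> first | (exfalso; omega) | (push_cast; module)
  · rw [if_neg hnm, if_neg (by omega), if_neg (by omega), smul_zero]
    push_cast
    module

theorem lie_sugawara_sugawara (hH : IsHeisenberg J) (hR : IsRestricted J) (n m : ℤ) :
    ⁅sugawara hR n, sugawara hR m⁆ = ((n : ℂ) - m) • sugawara hR (n + m)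
      + (if n + m = 0 then ((n : ℂ) ^ 3 - n) / 12 else 0) • 1 := by
  ext v
  let K : ℤ → V := fun i => normalOrder J (-i) (i + (n + m)) v
  have hK : HasFiniteSupport K := hasFiniteSupport_normalOrder hR (n + m) v
  have hK₁ : HasFiniteSupport fun j : ℤ => (j : ℂ) • K (j - n) :=
    (hK.comp_of_injective (sub_left_injective (b := n))).fun_smul_right _
  have hK₂ : ∀ k : ℤ, HasFiniteSupport fun j : ℤ => ((j : ℂ) + k) • K j :=
    fun k => hK.fun_smul_right _
  have hshift : ∑ᶠ j : ℤ, (j : ℂ) • K (j - n) = ∑ᶠ j : ℤ, ((j : ℂ) + n) • K j := by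
    rw [← finsum_comp_equiv (Equiv.addRight n)]
    simp only [Equiv.coe_addRight, add_sub_cancel_right, Int.cast_add]
  calc ⁅sugawara hR n, sugawara hR m⁆ v
      = (1 / 2 : ℂ) • ∑ᶠ j : ℤ, ⁅sugawara hR n, normalOrder J (-j) (j + m)⁆ v := by
        rw [← lie_skew, LinearMap.neg_apply, lie_sugawara_apply, ← smul_neg,
          ← finsum_neg_distrib]
        simp only [← LinearMap.neg_apply, lie_skew]
    _ = (1 / 2 : ℂ) • ((∑ᶠ j : ℤ, ((j : ℂ) + n) • K j - ∑ᶠ j : ℤ, ((j : ℂ) + m) • K j)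
          + (((n : ℂ) ^ 3 - n) / 6) • (if n + m = 0 then v else 0)) := by
        simp only [lie_sugawara_normalOrder_apply hH hR]
        rw [finsum_add_distrib (hK₁.fun_sub (hK₂ m))
          ((hasFiniteSupport_centralCoeff n).fun_smul_left _), finsum_sub_distrib hK₁ (hK₂ m),
          hshift, ← finsum_smul, finsum_centralCoeff]
    _ = _ := by
        rw [← finsum_sub_distrib (hK₂ n) (hK₂ m)]
        simp only [← sub_smul, add_sub_add_left_eq_sub, ← smul_finsum, LinearMap.add_apply,
          LinearMap.smul_apply, Module.End.one_apply, sugawara_apply]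
        split_ifs <;> module

noncomputable def oscOp (hR : IsRestricted J) (l : ℝ) (n : ℤ) : Module.End ℂ V :=
  (if n = 0 then ((l ^ 2 / 2 : ℝ) : ℂ) else 0) • 1 + sugawara hR n + (Complex.I * l * n) • J n

theorem oscL_apply_eq_oscOp (hR : IsRestricted J) (l : ℝ) (n : ℤ) (v : V) :
    oscL J l n v = oscOp hR l n v := by
  simp only [oscL, oscOp, ite_smul, zero_smul, LinearMap.add_apply, LinearMap.smul_apply,
    sugawara_apply]
  split_ifs <;> simp

theorem lie_oscOp (hH : IsHeisenberg J) (hR : IsRestricted J) (l : ℝ) (n m : ℤ) :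
    ⁅oscOp hR l n, oscOp hR l m⁆ = ((n : ℂ) - m) • oscOp hR l (n + m)
      + (if n + m = 0 then ((n : ℂ) ^ 3 - n) / 12 * (1 + 12 * (l : ℂ) ^ 2) else 0) • 1 := by
  simp only [oscOp, lie_add, add_lie, lie_smul, smul_lie,
    (Commute.one_left (_ : Module.End ℂ V)).lie_eq, (Commute.one_right (_ : Module.End ℂ V)).lie_eq,
    ← lie_skew (J n) (sugawara hR m),
    lie_sugawara_sugawara hH, lie_sugawara_mode hH, hH n m, add_comm m n, smul_zero, zero_add]
  by_cases hnm : n + m = 0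
  · obtain rfl : m = -n := by omega
    simp only [add_neg_cancel, if_true]
    push_cast
    match_scalars <;> first | ring1 | linear_combination (-(l : ℂ) ^ 2 * n ^ 3) * Complex.I_sq
  · simp only [if_neg hnm, zero_smul, add_zero]
    push_cast
    module

end

theorem oscL_virasoro_relations_general {V : Type*} [AddCommGroup V] [Module ℂ V]
    (l : ℝ) (J : ℤ → Module.End ℂ V)
    (hcomm : ∀ n m : ℤ, J n * J m - J m * J n =
      if n + m = 0 then (n : ℂ) • (1 : Module.End ℂ V) else 0)
    (hloc : ∀ v : V, ∃ N : ℕ, ∀ n : ℤ, (N : ℤ) ≤ n → J n v = 0) :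
    ∀ (n m : ℤ) (v : V),
      oscL J l n (oscL J l m v) - oscL J l m (oscL J l n v) =
        ((n : ℂ) - (m : ℂ)) • oscL J l (n + m) v +
          (if n + m = 0 then
              (((n : ℂ) ^ 3 - (n : ℂ)) / 12) * (1 + 12 * (l : ℂ) ^ 2)
            else 0) • v := by
  intro n m v
  simpa only [oscL_apply_eq_oscOp hloc, Ring.lie_def, LinearMap.sub_apply, Module.End.mul_apply,
    LinearMap.add_apply, LinearMap.smul_apply, Module.End.one_apply]
    using LinearMap.congr_fun (lie_oscOp hcomm hloc l n m) v

/-- The oscillator operators satisfy the Virasoro commutation relations with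
central charge `c = 1 + 12λ²`. -/
theorem oscL_virasoro_relations {V : Type*} [AddCommGroup V] [Module ℂ V]
    (l q : ℝ) (J : ℤ → Module.End ℂ V)
    (hJ0 : J 0 = (q : ℂ) • (1 : Module.End ℂ V))
    (hcomm : ∀ n m : ℤ, J n * J m - J m * J n =
      if n + m = 0 then (n : ℂ) • (1 : Module.End ℂ V) else 0)
    (hloc : ∀ v : V, ∃ N : ℕ, ∀ n : ℤ, (N : ℤ) ≤ n → J n v = 0) :
    ∀ (n m : ℤ) (v : V),
      oscL J l n (oscL J l m v) - oscL J l m (oscL J l n v) =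
        ((n : ℂ) - (m : ℂ)) • oscL J l (n + m) v +
          (if n + m = 0 then
              (((n : ℂ) ^ 3 - (n : ℂ)) / 12) * (1 + 12 * (l : ℂ) ^ 2)
            else 0) • v :=
  oscL_virasoro_relations_general l J hcomm hloc
end

section
/- With the oscillator operators L_n defined from the family (J_n) with parameters (λ, q), assume in addition that V carries a positive definite inner product ⟨·,·⟩ (conjugate linear in the first variable) such that ⟨ξ, J_n ψ⟩ = ⟨J_{−n} ξ, ψ⟩ for all ξ, ψ ∈ V and n ∈ ℤ. Then ⟨ξ, L_n ψ⟩ = ⟨L_{−n} ξ, ψ⟩ for all ξ, ψ ∈ V and n ∈ ℤ; that is, the representation of the Virasoro algebra defined by the L_n is unitary (hermitian). -/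
open scoped BigOperators

/-!
The adjoint of `:J_i J_j:` is `:J_{-j} J_{-i}:`, since reversing both indices reverses their
order. Hence the adjoint of the `j`-th summand of `L_n` is the `(j + n)`-th summand of `L_{-n}`;
locality makes both sums finite, so they can be paired termwise. The scalar terms match because
`conj (i λ (-n)) = i λ n`.
-/

section InnerFinsum

variable {𝕜 E ι : Type*} [RCLike 𝕜] [SeminormedAddCommGroup E] [InnerProductSpace 𝕜 E]

lemma inner_finsum_right (x : E) {f : ι → E} (hf : f.HasFiniteSupport) :
    inner 𝕜 x (∑ᶠ i, f i) = ∑ᶠ i, inner 𝕜 x (f i) :=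
  map_finsum (innerₛₗ 𝕜 x) hf

lemma finsum_inner {f : ι → E} (hf : f.HasFiniteSupport) (y : E) :
    inner 𝕜 (∑ᶠ i, f i) y = ∑ᶠ i, inner 𝕜 (f i) y :=
  map_finsum (AddMonoidHom.mk' (inner 𝕜 · y) (inner_add_left · · y)) hf

end InnerFinsum

section NormalOrder

variable {V : Type*} [AddCommGroup V] [Module ℂ V] {J : ℤ → Module.End ℂ V} {v : V}

lemma normalOrder_apply_eq_zero {N : ℤ} (hv : ∀ m, N ≤ m → J m v = 0) {i j : ℤ}
    (h : N ≤ max i j) : normalOrder J i j v = 0 := by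
  unfold normalOrder
  split_ifs with hij
  · rw [Module.End.mul_apply, hv j (by omega), map_zero]
  · rw [Module.End.mul_apply, hv i (by omega), map_zero]

lemma hasFiniteSupport_normalOrder_apply {N : ℤ} (hv : ∀ m, N ≤ m → J m v = 0) (n : ℤ) :
    (fun j ↦ normalOrder J (-j) (j + n) v).HasFiniteSupport :=
  (Set.finite_Ioo (-N) (N - n)).subset fun j hj ↦ by
    by_contra hout
    rw [Set.mem_Ioo, not_and_or, not_lt, not_lt] at hout
    exact hj (normalOrder_apply_eq_zero hv (by omega))

end NormalOrder

section Adjoint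

open scoped ComplexInnerProductSpace

variable {V : Type*} [NormedAddCommGroup V] [InnerProductSpace ℂ V] {J : ℤ → Module.End ℂ V}

lemma inner_normalOrder_apply (hadj : ∀ (ξ ψ : V) (n : ℤ), ⟪ξ, J n ψ⟫ = ⟪J (-n) ξ, ψ⟫)
    (ξ ψ : V) (i j : ℤ) :
    ⟪ξ, normalOrder J i j ψ⟫ = ⟪normalOrder J (-j) (-i) ξ, ψ⟫ := by
  unfold normalOrder
  by_cases hij : i ≤ j
  · rw [if_pos hij, if_pos (neg_le_neg hij), Module.End.mul_apply, Module.End.mul_apply,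
      hadj, hadj]
  · rw [if_neg hij, if_neg (by omega), Module.End.mul_apply, Module.End.mul_apply, hadj, hadj]

lemma inner_finsum_normalOrder (hadj : ∀ (ξ ψ : V) (n : ℤ), ⟪ξ, J n ψ⟫ = ⟪J (-n) ξ, ψ⟫)
    (hloc : ∀ v : V, ∃ N : ℕ, ∀ n : ℤ, (N : ℤ) ≤ n → J n v = 0) (ξ ψ : V) (n : ℤ) :
    ⟪ξ, ∑ᶠ j, normalOrder J (-j) (j + n) ψ⟫ = ⟪∑ᶠ j, normalOrder J (-j) (j + -n) ξ, ψ⟫ := by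
  obtain ⟨Nξ, hξ⟩ := hloc ξ
  obtain ⟨Nψ, hψ⟩ := hloc ψ
  rw [inner_finsum_right _ (hasFiniteSupport_normalOrder_apply hψ n),
    finsum_inner (hasFiniteSupport_normalOrder_apply hξ (-n)),
    ← finsum_comp_equiv (Equiv.addRight n) (f := fun j ↦ ⟪normalOrder J (-j) (j + -n) ξ, ψ⟫)]
  refine finsum_congr fun j ↦ ?_
  simp only [inner_normalOrder_apply hadj, Equiv.coe_addRight, neg_neg, add_neg_cancel_right]

end Adjoint

open scoped ComplexInnerProductSpace in
theorem oscL_unitary_general {V : Type*} [NormedAddCommGroup V] [InnerProductSpace ℂ V]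
    (l : ℝ) (J : ℤ → Module.End ℂ V)
    (hloc : ∀ v : V, ∃ N : ℕ, ∀ n : ℤ, (N : ℤ) ≤ n → J n v = 0)
    (hadj : ∀ (ξ ψ : V) (n : ℤ), ⟪ξ, J n ψ⟫ = ⟪J (-n) ξ, ψ⟫) :
    ∀ (ξ ψ : V) (n : ℤ), ⟪ξ, oscL J l n ψ⟫ = ⟪oscL J l (-n) ξ, ψ⟫ := by
  intro ξ ψ n
  simp only [oscL, neg_eq_zero]
  split_ifs <;>
  simp only [inner_add_right, inner_add_left, inner_smul_right, inner_smul_left, inner_zero_right,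
    inner_zero_left, inner_finsum_normalOrder hadj hloc, hadj ξ ψ n, map_mul, map_div₀, map_one,
    map_ofNat, map_neg, map_intCast, Complex.conj_ofReal, Complex.conj_I, Int.cast_neg] <;>
  ring

open scoped ComplexInnerProductSpace in
/-- Unitarity of the oscillator representation: if `⟨ξ, J_n ψ⟩ = ⟨J_{-n} ξ, ψ⟩`
for all `n`, then `⟨ξ, L_n ψ⟩ = ⟨L_{-n} ξ, ψ⟩` for all `n`. -/
theorem oscL_unitary {V : Type*} [NormedAddCommGroup V] [InnerProductSpace ℂ V]
    (l q : ℝ) (J : ℤ → Module.End ℂ V)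
    (hJ0 : J 0 = (q : ℂ) • (1 : Module.End ℂ V))
    (hcomm : ∀ n m : ℤ, J n * J m - J m * J n =
      if n + m = 0 then (n : ℂ) • (1 : Module.End ℂ V) else 0)
    (hloc : ∀ v : V, ∃ N : ℕ, ∀ n : ℤ, (N : ℤ) ≤ n → J n v = 0)
    (hadj : ∀ (ξ ψ : V) (n : ℤ), ⟪ξ, J n ψ⟫ = ⟪J (-n) ξ, ψ⟫) :
    ∀ (ξ ψ : V) (n : ℤ), ⟪ξ, oscL J l n ψ⟫ = ⟪oscL J l (-n) ξ, ψ⟫ :=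
  oscL_unitary_general l J hloc hadj
end

section
/- With the oscillator operators L_n defined from the family (J_n) with parameters (λ, q), for all n, m ∈ ℤ one has L_n ∘ J_m − J_m ∘ L_n = −m·J_{n+m} + iλn²·δ_{n+m,0}·id_V. In particular the energy-momentum field built from the L_n is relatively local to the current built from the J_n. -/
open scoped BigOperators

section Aux
variable {V : Type*} [AddCommGroup V] [Module ℂ V]

lemma comm_apply' (J : ℤ → Module.End ℂ V)
    (hcomm : ∀ n m : ℤ, J n * J m - J m * J n =
      if n + m = 0 then (n : ℂ) • (1 : Module.End ℂ V) else 0)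
    (n m : ℤ) (v : V) :
    J n (J m v) = J m (J n v) + (if n + m = 0 then (n:ℂ) • v else 0) := by
  have h := congrArg (fun T : Module.End ℂ V => T v) (hcomm n m)
  simp only [LinearMap.sub_apply, Module.End.mul_apply, apply_ite
    (fun T : Module.End ℂ V => T v), LinearMap.smul_apply, Module.End.one_apply,
    LinearMap.zero_apply] at h
  linear_combination (norm := abel) h

lemma mul_comm_apply (J : ℤ → Module.End ℂ V)
    (hcomm : ∀ n m : ℤ, J n * J m - J m * J n =
      if n + m = 0 then (n : ℂ) • (1 : Module.End ℂ V) else 0)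
    (a b m : ℤ) (v : V) :
    J a (J b (J m v)) - J m (J a (J b v)) =
      (if b + m = 0 then ((b:ℂ)) else 0) • J a v +
      (if a + m = 0 then ((a:ℂ)) else 0) • J b v := by
  have h1 := comm_apply' J hcomm b m v
  have h2 := comm_apply' J hcomm a m (J b v)
  rw [h1, map_add, h2]
  by_cases hb : b + m = 0 <;> by_cases ha : a + m = 0 <;>
    simp [hb, ha, map_smul] <;> abel

lemma normalOrder_comm (J : ℤ → Module.End ℂ V)
    (hcomm : ∀ n m : ℤ, J n * J m - J m * J n =
      if n + m = 0 then (n : ℂ) • (1 : Module.End ℂ V) else 0)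
    (a b m : ℤ) (v : V) :
    normalOrder J a b (J m v) - J m (normalOrder J a b v) =
      (if b + m = 0 then ((b:ℂ)) else 0) • J a v +
      (if a + m = 0 then ((a:ℂ)) else 0) • J b v := by
  by_cases h : a ≤ b
  · simp only [normalOrder, if_pos h, Module.End.mul_apply]
    exact mul_comm_apply J hcomm a b m v
  · simp only [normalOrder, if_neg h, Module.End.mul_apply]
    rw [mul_comm_apply J hcomm b a m v, add_comm]

lemma normalOrder_support_finite (J : ℤ → Module.End ℂ V)
    (hloc : ∀ v : V, ∃ N : ℕ, ∀ n : ℤ, (N : ℤ) ≤ n → J n v = 0)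
    (n : ℤ) (v : V) :
    (Function.support fun j : ℤ => normalOrder J (-j) (j + n) v).Finite := by
  obtain ⟨N, hN⟩ := hloc v
  apply Set.Finite.subset (Set.finite_Icc (-((N:ℤ) + |n| + 1)) ((N:ℤ) + |n| + 1))
  intro j hj
  simp only [Function.mem_support] at hj
  by_contra hj'
  simp only [Set.mem_Icc, not_and_or, not_le] at hj'
  have h1 := neg_abs_le n
  have h2 := le_abs_self n
  rcases hj' with hj' | hj'
  · have hle : ¬ (-j ≤ j + n) := by omega
    have hz : J (-j) v = 0 := hN (-j) (by omega)
    exact absurd (by simp [normalOrder, if_neg hle, Module.End.mul_apply, hz]) hj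
  · have hle : -j ≤ j + n := by omega
    have hz : J (j + n) v = 0 := hN (j + n) (by omega)
    exact absurd (by simp [normalOrder, if_pos hle, Module.End.mul_apply, hz]) hj

end Aux

/-- Commutation relations of the oscillator Virasoro operators with the
current modes: `[L_n, J_m] = -m J_{n+m} + iλn² δ_{n+m,0}`. -/
theorem oscL_current_commutator {V : Type*} [AddCommGroup V] [Module ℂ V]
    (l q : ℝ) (J : ℤ → Module.End ℂ V)
    (hJ0 : J 0 = (q : ℂ) • (1 : Module.End ℂ V))
    (hcomm : ∀ n m : ℤ, J n * J m - J m * J n =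
      if n + m = 0 then (n : ℂ) • (1 : Module.End ℂ V) else 0)
    (hloc : ∀ v : V, ∃ N : ℕ, ∀ n : ℤ, (N : ℤ) ≤ n → J n v = 0) :
    ∀ (n m : ℤ) (v : V),
      oscL J l n (J m v) - J m (oscL J l n v) =
        (-(m : ℂ)) • J (n + m) v +
          (if n + m = 0 then Complex.I * (l : ℂ) * (n : ℂ) ^ 2 else 0) • v := by
  intro n m v
  have hf := normalOrder_support_finite J hloc n v
  have hfm := normalOrder_support_finite J hloc n (J m v)
  have hJmf : (Function.support fun j : ℤ =>
      J m (normalOrder J (-j) (j + n) v)).Finite :=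
    hf.subset (Function.support_comp_subset (map_zero (J m)) _)
  -- pointwise commutator inside the sum
  have hg1 : (Function.support fun j : ℤ =>
      (if (j + n) + m = 0 then ((j + n : ℤ) : ℂ) else 0) • J (-j) v).Finite := by
    apply Set.Finite.subset (Set.finite_singleton (-(n + m)))
    intro j hj
    simp only [Function.mem_support] at hj
    simp only [Set.mem_singleton_iff]
    by_contra hne
    exact hj (by rw [if_neg (by omega), zero_smul])
  have hg2 : (Function.support fun j : ℤ =>
      (if (-j) + m = 0 then ((-j : ℤ) : ℂ) else 0) • J (j + n) v).Finite := by
    apply Set.Finite.subset (Set.finite_singleton m)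
    intro j hj
    simp only [Function.mem_support] at hj
    simp only [Set.mem_singleton_iff]
    by_contra hne
    exact hj (by rw [if_neg (by omega), zero_smul])
  have S1 : (∑ᶠ j : ℤ, (if (j + n) + m = 0 then ((j + n : ℤ) : ℂ) else 0) • J (-j) v)
      = (-(m : ℂ)) • J (n + m) v := by
    rw [finsum_eq_single _ (-(n + m))
      (fun j hj => by rw [if_neg (by omega), zero_smul])]
    rw [if_pos (by ring)]
    have e1 : (-(n + m) + n : ℤ) = -m := by ring
    have e2 : -(-(n + m)) = n + m := by ring
    rw [e1, e2]
    push_cast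
    ring_nf
  have S2 : (∑ᶠ j : ℤ, (if (-j) + m = 0 then ((-j : ℤ) : ℂ) else 0) • J (j + n) v)
      = (-(m : ℂ)) • J (n + m) v := by
    rw [finsum_eq_single _ m
      (fun j hj => by rw [if_neg (by omega), zero_smul])]
    rw [if_pos (by ring)]
    have e2 : m + n = n + m := by ring
    rw [e2]
    push_cast
    ring_nf
  -- the middle term
  have key2 : (1 / 2 : ℂ) • (∑ᶠ j : ℤ, normalOrder J (-j) (j + n) (J m v))
      - J m ((1 / 2 : ℂ) • (∑ᶠ j : ℤ, normalOrder J (-j) (j + n) v))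
      = (-(m : ℂ)) • J (n + m) v := by
    have hmap : J m (∑ᶠ j : ℤ, normalOrder J (-j) (j + n) v)
        = ∑ᶠ j : ℤ, J m (normalOrder J (-j) (j + n) v) :=
      AddMonoidHom.map_finsum (J m).toAddMonoidHom hf
    rw [map_smul, ← smul_sub, hmap]
    have hB : (∑ᶠ j : ℤ, normalOrder J (-j) (j + n) (J m v))
        - (∑ᶠ j : ℤ, J m (normalOrder J (-j) (j + n) v))
        = ∑ᶠ j : ℤ, (normalOrder J (-j) (j + n) (J m v)
            - J m (normalOrder J (-j) (j + n) v)) :=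
      (finsum_sub_distrib hfm hJmf).symm
    rw [hB]
    have hC : ∀ j : ℤ, normalOrder J (-j) (j + n) (J m v)
        - J m (normalOrder J (-j) (j + n) v)
        = (if (j + n) + m = 0 then ((j + n : ℤ) : ℂ) else 0) • J (-j) v
          + (if (-j) + m = 0 then ((-j : ℤ) : ℂ) else 0) • J (j + n) v :=
      fun j => normalOrder_comm J hcomm (-j) (j + n) m v
    rw [finsum_congr hC, finsum_add_distrib hg1 hg2, S1, S2, ← add_smul, smul_smul]
    congr 1
    ring
  -- the last term
  have key3 : (Complex.I * (l : ℂ) * (n : ℂ)) • J n (J m v)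
      - J m ((Complex.I * (l : ℂ) * (n : ℂ)) • J n v)
      = (if n + m = 0 then Complex.I * (l : ℂ) * (n : ℂ) ^ 2 else 0) • v := by
    rw [map_smul, ← smul_sub]
    have h := comm_apply' J hcomm n m v
    have h' : J n (J m v) - J m (J n v) = (if n + m = 0 then (n : ℂ) • v else 0) := by
      rw [h]; abel
    rw [h']
    split_ifs with hnm
    · rw [smul_smul]; congr 1; ring
    · rw [smul_zero, zero_smul]
  -- the first term
  have key1 : (if n = 0 then (((l ^ 2 / 2 : ℝ) : ℂ)) • (J m v) else 0)
      - J m (if n = 0 then (((l ^ 2 / 2 : ℝ) : ℂ)) • v else 0) = 0 := by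
    split_ifs with hn
    · rw [map_smul, sub_self]
    · rw [map_zero, sub_self]
  simp only [oscL]
  rw [map_add, map_add]
  calc (if n = 0 then (((l ^ 2 / 2 : ℝ) : ℂ)) • (J m v) else 0)
        + (1 / 2 : ℂ) • (∑ᶠ j : ℤ, normalOrder J (-j) (j + n) (J m v))
        + (Complex.I * (l : ℂ) * (n : ℂ)) • J n (J m v)
        - (J m (if n = 0 then (((l ^ 2 / 2 : ℝ) : ℂ)) • v else 0)
          + J m ((1 / 2 : ℂ) • (∑ᶠ j : ℤ, normalOrder J (-j) (j + n) v))
          + J m ((Complex.I * (l : ℂ) * (n : ℂ)) • J n v))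
      = ((if n = 0 then (((l ^ 2 / 2 : ℝ) : ℂ)) • (J m v) else 0)
          - J m (if n = 0 then (((l ^ 2 / 2 : ℝ) : ℂ)) • v else 0))
        + ((1 / 2 : ℂ) • (∑ᶠ j : ℤ, normalOrder J (-j) (j + n) (J m v))
          - J m ((1 / 2 : ℂ) • (∑ᶠ j : ℤ, normalOrder J (-j) (j + n) v)))
        + ((Complex.I * (l : ℂ) * (n : ℂ)) • J n (J m v)
          - J m ((Complex.I * (l : ℂ) * (n : ℂ)) • J n v)) := by abel
    _ = (-(m : ℂ)) • J (n + m) v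
          + (if n + m = 0 then Complex.I * (l : ℂ) * (n : ℂ) ^ 2 else 0) • v := by
        rw [key1, key2, key3, zero_add]
end
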